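/- With the notation of the previous statement, additionally define a_r := Σ_n x_n τ^{rn} φ_n^A and b_r := Σ_n y_n τ^{rn} φ_n^B where τ := exp(2πi/3). Then for each r = 0,1,2, a_r ⊗ b_r = Σ_{n=0}^{2} t_n τ^{rn} φ̃_n. -/

import Mathlib

/-!
Since `t_n φ̃_n = ∑_k x_k y_{n-k} φ_k^A ⊗ φ_{n-k}^B` (also when `t_n = 0`, for then every
coefficient vanishes), the right-hand side regroups the product basis vectors
`e (k, m) = φ_k^A ⊗ φ_m^B` along the diagonals `k + m = n`; the phases agree because `τ³ = 1`.
-/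

open Finset

lemma Fin.pow_mul_val_add {M : Type*} [Monoid M] {n : ℕ} {ω : M} (hω : ω ^ n = 1)
    (r a b : Fin n) :
    ω ^ ((r : ℕ) * ((a : ℕ) + (b : ℕ))) = ω ^ ((r : ℕ) * ((a + b : Fin n) : ℕ)) :=
  pow_eq_pow_of_modEq (Nat.ModEq.mul_left _ (Nat.mod_modEq _ _).symm) hω

lemma sqrt_sum_sq_smul_one_div_smul_sum {ι E : Type*} [Fintype ι] [AddCommGroup E]
    [Module ℂ E] (c : ι → ℝ) (v : ι → E) :
    ((√(∑ i, c i ^ 2) : ℝ) : ℂ) • ((1 / √(∑ i, c i ^ 2) : ℝ) : ℂ) • ∑ i, (c i : ℂ) • v i =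
      ∑ i, (c i : ℂ) • v i := by
  by_cases hs : √(∑ i, c i ^ 2) = 0
  · have hc : ∀ i, c i = 0 := by
      intro i
      rw [Real.sqrt_eq_zero (by positivity),
        sum_eq_zero_iff_of_nonneg (fun i _ => sq_nonneg (c i))] at hs
      exact pow_eq_zero_iff two_ne_zero |>.mp (hs i (mem_univ i))
    simp [hc]
  · rw [smul_smul, ← Complex.ofReal_mul, mul_one_div_cancel hs, Complex.ofReal_one, one_smul]

theorem stmt_13_general {H : Type*} [NormedAddCommGroup H] [InnerProductSpace ℂ H]
    (e : Fin 3 × Fin 3 → H)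
    (x y : Fin 3 → ℝ)
    (τ : ℂ) (hτ : τ = Complex.exp (2 * Real.pi * Complex.I / 3))
    (t : Fin 3 → ℝ)
    (ht : ∀ n : Fin 3, t n = Real.sqrt (∑ k : Fin 3, (x k) ^ 2 * (y (n - k)) ^ 2))
    (φt : Fin 3 → H)
    (hφt : ∀ n : Fin 3,
      φt n = ((1 / t n : ℝ) : ℂ) • ∑ k : Fin 3, ((x k * y (n - k) : ℝ) : ℂ) • e (k, n - k)) :
    ∀ r : Fin 3,
      (∑ k : Fin 3, ∑ m : Fin 3,
        (((x k * y m : ℝ) : ℂ) * τ ^ ((r : ℕ) * ((k : ℕ) + (m : ℕ)))) • e (k, m)) =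
      ∑ n : Fin 3, (((t n : ℝ) : ℂ) * τ ^ ((r : ℕ) * (n : ℕ))) • φt n := by
  have hτ3 : τ ^ 3 = 1 := hτ ▸ (Complex.isPrimitiveRoot_exp 3 three_ne_zero).pow_eq_one
  have hscaled : ∀ n, ((t n : ℝ) : ℂ) • φt n =
      ∑ k : Fin 3, ((x k * y (n - k) : ℝ) : ℂ) • e (k, n - k) := by
    intro n
    simp only [ht, hφt, ← mul_pow]
    exact sqrt_sum_sq_smul_one_div_smul_sum (fun k => x k * y (n - k)) (fun k => e (k, n - k))
  intro r
  simp only [mul_comm _ (τ ^ _), ← smul_smul, hscaled, smul_sum]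
  conv_rhs => rw [sum_comm]
  refine sum_congr rfl fun k _ => ?_
  refine Fintype.sum_equiv (Equiv.addLeft k) _ _ fun m => ?_
  simp only [Equiv.coe_addLeft, add_sub_cancel_left, Fin.pow_mul_val_add hτ3]

/-- The tensor product `a_r ⊗ b_r` of symmetric ternary states equals
`∑ n, t n τ^{rn} φ̃ n`.  Here `e (k, m)` encodes the product basis vector
`φ_k^A ⊗ φ_m^B`, so that `a_r ⊗ b_r = ∑ k m, x k * y m * τ^{r(k+m)} • e (k, m)`. -/
theorem stmt_13 {H : Type*} [NormedAddCommGroup H] [InnerProductSpace ℂ H]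
    (e : Fin 3 × Fin 3 → H) (he : Orthonormal ℂ e)
    (x y : Fin 3 → ℝ) (hx : ∀ k, 0 < x k) (hy : ∀ m, 0 < y m)
    (τ : ℂ) (hτ : τ = Complex.exp (2 * Real.pi * Complex.I / 3))
    (t : Fin 3 → ℝ)
    (ht : ∀ n : Fin 3, t n = Real.sqrt (∑ k : Fin 3, (x k) ^ 2 * (y (n - k)) ^ 2))
    (φt : Fin 3 → H)
    (hφt : ∀ n : Fin 3,
      φt n = ((1 / t n : ℝ) : ℂ) • ∑ k : Fin 3, ((x k * y (n - k) : ℝ) : ℂ) • e (k, n - k)) :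
    ∀ r : Fin 3,
      (∑ k : Fin 3, ∑ m : Fin 3,
        (((x k * y m : ℝ) : ℂ) * τ ^ ((r : ℕ) * ((k : ℕ) + (m : ℕ)))) • e (k, m)) =
      ∑ n : Fin 3, (((t n : ℝ) : ℂ) * τ ^ ((r : ℕ) * (n : ℕ))) • φt n :=
  stmt_13_general e x y τ hτ t ht φt hφt
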